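/- Let G be a relevant position of the game influence and let u, v ∈ V(G) be such that v ∈ V(G_u) (where u ∈ L(G) or u ∈ R(G)). Then Succ(G_u, v) = Succ(G, v) ∩ V(G_u) and Pred(G_u, v) = Pred(G, v) ∩ V(G_u). -/

import Mathlib

namespace Influence

open Finset

/-- A position of the game `influence`: a finite directed graph with vertex set `V`,
arc set `A`, and the set `left` of Left (black) vertices; Right's vertices are `V \ left`. -/
structure Pos (α : Type) [DecidableEq α] where
  V : Finset α
  A : Finset (α × α)
  left : Finset α

variable {α : Type} [DecidableEq α]

namespace Pos

/-- The set of Right vertices. -/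
def R (G : Pos α) : Finset α := G.V \ G.left

/-- Well-formedness: arcs join vertices, and Left vertices are vertices. -/
def WF (G : Pos α) : Prop :=
  (∀ p ∈ G.A, p.1 ∈ G.V ∧ p.2 ∈ G.V) ∧ G.left ⊆ G.V

open Classical in
/-- `Succ G x`: vertices reachable from `x` by a directed path (including `x` itself). -/
noncomputable def Succ (G : Pos α) (x : α) : Finset α :=
  G.V.filter (fun z => Relation.ReflTransGen (fun a b => (a, b) ∈ G.A) x z)

open Classical in
/-- `Pred G y`: vertices from which `y` is reachable by a directed path (including `y`). -/
noncomputable def Pred (G : Pos α) (y : α) : Finset α :=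
  G.V.filter (fun z => Relation.ReflTransGen (fun a b => (a, b) ∈ G.A) z y)

open Classical in
noncomputable def ForcL (G : Pos α) : Finset α :=
  G.left.filter (fun x => G.Succ x ⊆ G.left)

open Classical in
noncomputable def ForcR (G : Pos α) : Finset α :=
  G.R.filter (fun y => G.Pred y ⊆ G.R)

noncomputable def Forc (G : Pos α) : Finset α := G.ForcL ∪ G.ForcR

/-- A relevant position: no forced vertices. -/
def Relevant (G : Pos α) : Prop := G.Forc = ∅

/-- The induced subgraph `G ∖ S` on `V(G) \ S`. -/
def erase (G : Pos α) (S : Finset α) : Pos α :=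
  ⟨G.V \ S, G.A.filter (fun p => p.1 ∈ G.V \ S ∧ p.2 ∈ G.V \ S), G.left \ S⟩

open Classical in
/-- The set of vertices removed when playing `x`:  for `x ∈ L`,
`Rmv(G,x) = Succ(G,x) ∪ Forc(G ∖ Succ(G,x))`; for `y ∈ R`,
`Rmv(G,y) = Pred(G,y) ∪ Forc(G ∖ Pred(G,y))`. -/
noncomputable def Rmv (G : Pos α) (x : α) : Finset α :=
  if x ∈ G.left then G.Succ x ∪ (G.erase (G.Succ x)).Forc
  else G.Pred x ∪ (G.erase (G.Pred x)).Forc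

/-- The resulting relevant position `G_x` after the move `x`. -/
noncomputable def move (G : Pos α) (x : α) : Pos α := G.erase (G.Rmv x)

mutual
/-- Auxiliary (fuel-indexed) score of Left playing first. -/
noncomputable def sL1Aux : ℕ → Pos α → ℕ
  | 0, _ => 0
  | k + 1, G =>
      if G.left.Nonempty then
        G.left.sup (fun x => (G.Rmv x).card + sL2Aux k (G.move x))
      else 0

/-- Auxiliary (fuel-indexed) score of Left playing second. -/
noncomputable def sL2Aux : ℕ → Pos α → ℕ
  | 0, _ => 0
  | k + 1, G =>
      if h : G.R.Nonempty then G.R.inf' h (fun y => sL1Aux k (G.move y))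
      else 0
end

mutual
/-- Auxiliary (fuel-indexed) score of Right playing first. -/
noncomputable def sR1Aux : ℕ → Pos α → ℕ
  | 0, _ => 0
  | k + 1, G =>
      if G.R.Nonempty then
        G.R.sup (fun y => (G.Rmv y).card + sR2Aux k (G.move y))
      else 0

/-- Auxiliary (fuel-indexed) score of Right playing second. -/
noncomputable def sR2Aux : ℕ → Pos α → ℕ
  | 0, _ => 0
  | k + 1, G =>
      if h : G.left.Nonempty then G.left.inf' h (fun x => sR1Aux k (G.move x))
      else 0
end

/-- `s^L_1(G)`: the score of Left when Left plays first (optimal play). -/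
noncomputable def sL1 (G : Pos α) : ℕ := sL1Aux G.V.card G

/-- `s^L_2(G)`: the score of Left when Right plays first (optimal play). -/
noncomputable def sL2 (G : Pos α) : ℕ := sL2Aux G.V.card G

/-- `s^R_1(G)`: the score of Right when Right plays first (optimal play). -/
noncomputable def sR1 (G : Pos α) : ℕ := sR1Aux G.V.card G

/-- `s^R_2(G)`: the score of Right when Left plays first (optimal play). -/
noncomputable def sR2 (G : Pos α) : ℕ := sR2Aux G.V.card G

/-- The Left score `Ls(G) = s^L_1(G) - s^R_2(G)`. -/
noncomputable def Ls (G : Pos α) : ℤ := (G.sL1 : ℤ) - (G.sR2 : ℤ)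

/-- The Right score `Rs(G) = s^L_2(G) - s^R_1(G)`. -/
noncomputable def Rs (G : Pos α) : ℤ := (G.sL2 : ℤ) - (G.sR1 : ℤ)

/-- Disjoint union (game sum) of two positions. -/
def union (G G' : Pos α) : Pos α := ⟨G.V ∪ G'.V, G.A ∪ G'.A, G.left ∪ G'.left⟩

/-- The empty position. -/
protected def empty : Pos α := ⟨∅, ∅, ∅⟩

end Pos

/-- The sum of a finite list of positions. -/
def sumList (l : List (Pos α)) : Pos α := l.foldr Pos.union Pos.empty

open Classical in
/-- `G` is a segment: its vertex set is a set of at least two consecutive integers,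
Left's vertices are the even ones, Right's the odd ones, and there is an arc from each
even vertex to each of its (odd) neighbours `±1` lying in the vertex set. -/
def IsSegment (G : Pos ℤ) : Prop :=
  2 ≤ G.V.card ∧
  (∀ i j k : ℤ, i ∈ G.V → j ∈ G.V → i ≤ k → k ≤ j → k ∈ G.V) ∧
  G.left = G.V.filter (fun n => Even n) ∧
  G.A = (G.V ×ˢ G.V).filter (fun p => Even p.1 ∧ (p.2 = p.1 + 1 ∨ p.2 = p.1 - 1))

/-- `G` is the finite disjoint union (game sum) of the list `l` of segments. -/
def IsSegUnion (G : Pos ℤ) (l : List (Pos ℤ)) : Prop :=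
  (∀ H ∈ l, IsSegment H) ∧
  l.Pairwise (fun H H' => Disjoint H.V H'.V) ∧
  G = sumList l


open Classical in
/-- `G` is an alternated cycle: obtained from a segment `S` with an even number of
vertices by adding the arc `(x, y)` where `x` is the endpoint of `S` in `L` (even) and
`y` the endpoint in `R` (odd). -/
def IsAltCycle (G : Pos ℤ) : Prop :=
  ∃ (S : Pos ℤ) (x y : ℤ), IsSegment S ∧ Even S.V.card ∧
    x ∈ S.V ∧ y ∈ S.V ∧ Even x ∧ ¬ Even y ∧
    (∀ z ∈ S.V, min x y ≤ z ∧ z ≤ max x y) ∧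
    G.V = S.V ∧ G.left = S.left ∧ G.A = insert (x, y) S.A

open Classical in
/-- `T` is (a copy of) the oriented tree `T_n^c`: a rooted tree of depth `n+1`, all arcs
oriented from parent to child, in which every vertex at level `k ≤ n-1` has exactly `3`
children, every vertex at level `n` has exactly `c` children, the leaves (level `n+1`)
are the Right vertices and all other vertices are Left vertices. -/
def IsTnc (n c : ℕ) (T : Pos α) : Prop :=
  T.WF ∧ ∃ lvl : α → ℕ,
    (∀ v ∈ T.V, lvl v ≤ n + 1) ∧
    T.left = T.V.filter (fun v => lvl v ≤ n) ∧
    (∃! r, r ∈ T.V ∧ lvl r = 0) ∧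
    (∀ p ∈ T.A, lvl p.2 = lvl p.1 + 1) ∧
    (∀ v ∈ T.V, 0 < lvl v → ∃! u, (u, v) ∈ T.A) ∧
    (∀ v ∈ T.V, lvl v < n → (T.V.filter (fun w => (v, w) ∈ T.A)).card = 3) ∧
    (∀ v ∈ T.V, lvl v = n → (T.V.filter (fun w => (v, w) ∈ T.A)).card = c)

/-- `J` is (a copy of) `J_n^c`, the disjoint union of two disjoint copies of `T_n^c`. -/
def IsJnc (n c : ℕ) (J : Pos α) : Prop :=
  ∃ T1 T2 : Pos α, IsTnc n c T1 ∧ IsTnc n c T2 ∧ Disjoint T1.V T2.V ∧ J = T1.union T2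

end Influence

/-!
The set `Rmv(G,u)` contains a forward-closed trap `T` into which every arc entering `Rmv(G,u)`
leads: `T = Succ(G,u) ∪ Forc_L(G ∖ Succ(G,u))` if `u ∈ L`, and `T = Forc_L(G ∖ Pred(G,u))` if
`u ∈ R`. An arc from outside never enters `Forc_R(G ∖ X)`, because a predecessor of a
Right-forced vertex outside `X` is itself Right-forced. Hence a path of `G` between two vertices
of `G_u` never meets `Rmv(G,u)` and is already a path of `G_u`.
-/

open Influence Influence.Pos Finset Relation

namespace Influence.Pos

variable {α : Type} [DecidableEq α] {G : Pos α} {S T X : Finset α} {a b x y : α}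

theorem mem_erase_A :
    (a, b) ∈ (G.erase S).A ↔ (a, b) ∈ G.A ∧ a ∈ G.V \ S ∧ b ∈ G.V \ S :=
  mem_filter

theorem mem_Succ : y ∈ G.Succ x ↔ y ∈ G.V ∧ ReflTransGen (fun a b => (a, b) ∈ G.A) x y := by
  classical exact mem_filter

theorem mem_Pred : x ∈ G.Pred y ↔ x ∈ G.V ∧ ReflTransGen (fun a b => (a, b) ∈ G.A) x y := by
  classical exact mem_filter

theorem mem_ForcL : x ∈ G.ForcL ↔ x ∈ G.left ∧ G.Succ x ⊆ G.left :=
  mem_filter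

theorem mem_ForcR : y ∈ G.ForcR ↔ y ∈ G.R ∧ G.Pred y ⊆ G.R :=
  mem_filter

theorem erase_arc (hwf : G.WF) (hab : (a, b) ∈ G.A) (ha : a ∉ S) (hb : b ∉ S) :
    (a, b) ∈ (G.erase S).A :=
  mem_erase_A.2 ⟨hab, mem_sdiff.2 ⟨(hwf.1 _ hab).1, ha⟩, mem_sdiff.2 ⟨(hwf.1 _ hab).2, hb⟩⟩

theorem reflTransGen_of_erase
    (h : ReflTransGen (fun a b => (a, b) ∈ (G.erase S).A) x y) :
    ReflTransGen (fun a b => (a, b) ∈ G.A) x y :=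
  ReflTransGen.mono (fun _ _ hab => (mem_erase_A.1 hab).1) _ _ h

def FwdClosed (G : Pos α) (T : Finset α) : Prop :=
  ∀ a b, (a, b) ∈ G.A → a ∈ T → b ∈ T

def BwdClosed (G : Pos α) (T : Finset α) : Prop :=
  ∀ a b, (a, b) ∈ G.A → b ∈ T → a ∈ T

theorem FwdClosed.mem_of_reflTransGen (hT : G.FwdClosed T)
    (h : ReflTransGen (fun a b => (a, b) ∈ G.A) x y) (hx : x ∈ T) : y ∈ T := by
  induction h with
  | refl => exact hx
  | tail _ hab ih => exact hT _ _ hab ih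

theorem fwdClosed_Succ (hwf : G.WF) (x : α) : G.FwdClosed (G.Succ x) := fun _ _ hab ha =>
  mem_Succ.2 ⟨(hwf.1 _ hab).2, (mem_Succ.1 ha).2.tail hab⟩

theorem bwdClosed_Pred (hwf : G.WF) (y : α) : G.BwdClosed (G.Pred y) := fun _ _ hab hb =>
  mem_Pred.2 ⟨(hwf.1 _ hab).1, (mem_Pred.1 hb).2.head hab⟩

theorem mem_ForcL_erase_of_arc (hwf : G.WF) (ha : a ∈ (G.erase X).ForcL)
    (hab : (a, b) ∈ G.A) (hb : b ∉ X) : b ∈ (G.erase X).ForcL := by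
  obtain ⟨haL, hsub⟩ := mem_ForcL.1 ha
  have hab' := erase_arc hwf hab (mem_sdiff.1 haL).2 hb
  have hbV : b ∈ (G.erase X).V := (mem_erase_A.1 hab').2.2
  refine mem_ForcL.2 ⟨hsub (mem_Succ.2 ⟨hbV, .single hab'⟩), fun z hz => ?_⟩
  exact hsub (mem_Succ.2 ⟨(mem_Succ.1 hz).1, .head hab' (mem_Succ.1 hz).2⟩)

theorem mem_ForcR_erase_of_arc (hwf : G.WF) (hb : b ∈ (G.erase X).ForcR)
    (hab : (a, b) ∈ G.A) (ha : a ∉ X) : a ∈ (G.erase X).ForcR := by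
  obtain ⟨hbR, hsub⟩ := mem_ForcR.1 hb
  have hab' := erase_arc hwf hab ha (mem_sdiff.1 (mem_sdiff.1 hbR).1).2
  have haV : a ∈ (G.erase X).V := (mem_erase_A.1 hab').2.1
  refine mem_ForcR.2 ⟨hsub (mem_Pred.2 ⟨haV, .single hab'⟩), fun z hz => ?_⟩
  exact hsub (mem_Pred.2 ⟨(mem_Pred.1 hz).1, .tail (mem_Pred.1 hz).2 hab'⟩)

/-- Once a path enters `S` it stays in `T ⊆ S`, so a path between vertices outside `S`
never meets `S`. -/
structure IsTrap (G : Pos α) (S T : Finset α) : Prop where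
  subset : T ⊆ S
  fwdClosed : G.FwdClosed T
  mem_of_arc : ∀ a b, (a, b) ∈ G.A → a ∉ S → b ∈ S → b ∈ T

theorem IsTrap.reflTransGen_erase (hwf : G.WF) (hST : G.IsTrap S T)
    (h : ReflTransGen (fun a b => (a, b) ∈ G.A) x y) (hx : x ∉ S) (hy : y ∉ S) :
    ReflTransGen (fun a b => (a, b) ∈ (G.erase S).A) x y := by
  induction h using ReflTransGen.head_induction_on with
  | refl => exact .refl
  | @head a c hac hcy ih =>
    by_cases hc : c ∈ S
    · exact absurd (hST.subset (hST.fwdClosed.mem_of_reflTransGen hcy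
        (hST.mem_of_arc _ _ hac hx hc))) hy
    · exact .head (erase_arc hwf hac hx hc) (ih hc)

theorem notMem_ForcR_erase_of_arc (hwf : G.WF) (hab : (a, b) ∈ G.A)
    (ha : a ∉ X ∪ (G.erase X).Forc) : b ∉ (G.erase X).ForcR := fun hb =>
  ha (mem_union_right _ (mem_union_right _
    (mem_ForcR_erase_of_arc hwf hb hab fun haX => ha (mem_union_left _ haX))))

theorem isTrap_union_ForcL (hwf : G.WF) (hX : G.FwdClosed X) :
    G.IsTrap (X ∪ (G.erase X).Forc) (X ∪ (G.erase X).ForcL) where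
  subset := union_subset_union_right subset_union_left
  fwdClosed a b hab ha := by
    rcases mem_union.1 ha with haX | haF
    · exact mem_union_left _ (hX a b hab haX)
    · by_cases hbX : b ∈ X
      · exact mem_union_left _ hbX
      · exact mem_union_right _ (mem_ForcL_erase_of_arc hwf haF hab hbX)
  mem_of_arc a b hab ha hb := by
    rcases mem_union.1 hb with hbX | hbF
    · exact mem_union_left _ hbX
    · rcases mem_union.1 hbF with hbL | hbR
      · exact mem_union_right _ hbL
      · exact absurd hbR (notMem_ForcR_erase_of_arc hwf hab ha)

theorem isTrap_ForcL (hwf : G.WF) (hX : G.BwdClosed X) :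
    G.IsTrap (X ∪ (G.erase X).Forc) (G.erase X).ForcL where
  subset := subset_union_left.trans subset_union_right
  fwdClosed a b hab ha := by
    refine mem_ForcL_erase_of_arc hwf ha hab fun hbX => ?_
    exact (mem_sdiff.1 (mem_ForcL.1 ha).1).2 (hX a b hab hbX)
  mem_of_arc a b hab ha hb := by
    rcases mem_union.1 hb with hbX | hbF
    · exact absurd (hX a b hab hbX) fun haX => ha (mem_union_left _ haX)
    · rcases mem_union.1 hbF with hbL | hbR
      · exact hbL
      · exact absurd hbR (notMem_ForcR_erase_of_arc hwf hab ha)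

theorem exists_isTrap_Rmv (hwf : G.WF) (u : α) : ∃ T, G.IsTrap (G.Rmv u) T := by
  unfold Rmv
  split_ifs
  · exact ⟨_, isTrap_union_ForcL hwf (fwdClosed_Succ hwf u)⟩
  · exact ⟨_, isTrap_ForcL hwf (bwdClosed_Pred hwf u)⟩

theorem IsTrap.Succ_erase (hwf : G.WF) (hST : G.IsTrap S T) (hx : x ∈ (G.erase S).V) :
    (G.erase S).Succ x = G.Succ x ∩ (G.erase S).V := by
  ext z
  simp only [mem_inter, mem_Succ]
  refine ⟨fun ⟨hz, h⟩ => ⟨⟨(mem_sdiff.1 hz).1, reflTransGen_of_erase h⟩, hz⟩,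
    fun ⟨⟨_, h⟩, hz⟩ => ⟨hz, ?_⟩⟩
  exact hST.reflTransGen_erase hwf h (mem_sdiff.1 hx).2 (mem_sdiff.1 hz).2

theorem IsTrap.Pred_erase (hwf : G.WF) (hST : G.IsTrap S T) (hy : y ∈ (G.erase S).V) :
    (G.erase S).Pred y = G.Pred y ∩ (G.erase S).V := by
  ext z
  simp only [mem_inter, mem_Pred]
  refine ⟨fun ⟨hz, h⟩ => ⟨⟨(mem_sdiff.1 hz).1, reflTransGen_of_erase h⟩, hz⟩,
    fun ⟨⟨_, h⟩, hz⟩ => ⟨hz, ?_⟩⟩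
  exact hST.reflTransGen_erase hwf h (mem_sdiff.1 hz).2 (mem_sdiff.1 hy).2

end Influence.Pos

/-- evolution of successors and predecessors after a move. -/
theorem influence_succ_pred_move {α : Type} [DecidableEq α] (G : Pos α)
    (hwf : G.WF) (hrel : G.Relevant) (u v : α)
    (hu : u ∈ G.V) (hv : v ∈ (G.move u).V) :
    (G.move u).Succ v = G.Succ v ∩ (G.move u).V ∧
    (G.move u).Pred v = G.Pred v ∩ (G.move u).V := by
  obtain ⟨T, hT⟩ := exists_isTrap_Rmv hwf u
  exact ⟨hT.Succ_erase hwf hv, hT.Pred_erase hwf hv⟩
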